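/- arXiv:2307.16312 — 8 statements merged into one kernel-verified Lean document; each statement's English description precedes it below -/
import Mathlib

section
/- Let G be a finite simple graph. Then G has an ERR:OLD set if and only if the minimum degree of G is at least 3 and, for every 4-cycle subgraph on distinct vertices a, b, c, d (with edges ab, bc, cd, da), we have |N(a) △ N(c)| ≥ 3, where △ denotes symmetric difference. -/
/-- `S` is an error-correcting open-locating-dominating (ERR:OLD) set for `G`:
every vertex of `G` is at least 3-dominated by `S` (i.e. `|N(v) ∩ S| ≥ 3`), and
every pair of distinct vertices is 3-distinguished by `S`
(i.e. `|(N(u) ∩ S) △ (N(v) ∩ S)| ≥ 3`). -/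
def IsErrOld {V : Type*} (G : SimpleGraph V) (S : Set V) : Prop :=
  (∀ v : V, 3 ≤ (G.neighborSet v ∩ S).ncard) ∧
  (∀ u v : V, u ≠ v →
    3 ≤ (symmDiff (G.neighborSet u ∩ S) (G.neighborSet v ∩ S)).ncard)

/-- A finite simple graph has an ERR:OLD set iff its minimum degree is at least 3
and for every 4-cycle subgraph `abcd` we have `|N(a) △ N(c)| ≥ 3`. -/
theorem errOld_exists_iff {V : Type*} [Fintype V] (G : SimpleGraph V) :
    (∃ S : Set V, IsErrOld G S) ↔
      ((∀ v : V, 3 ≤ (G.neighborSet v).ncard) ∧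
        ∀ a b c d : V, a ≠ b → a ≠ c → a ≠ d → b ≠ c → b ≠ d → c ≠ d →
          G.Adj a b → G.Adj b c → G.Adj c d → G.Adj d a →
          3 ≤ (symmDiff (G.neighborSet a) (G.neighborSet c)).ncard) := by
  classical
  constructor
  · rintro ⟨S, hdom, hdist⟩
    constructor
    · intro v
      exact le_trans (hdom v) (Set.ncard_le_ncard Set.inter_subset_left (Set.toFinite _))
    · intro a b c d hab hac had hbc hbd hcd h1 h2 h3 h4
      refine le_trans (hdist a c hac) (Set.ncard_le_ncard ?_ (Set.toFinite _))
      intro x hx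
      simp only [Set.mem_symmDiff, Set.mem_inter_iff] at hx ⊢
      tauto
  · rintro ⟨hdeg, h4⟩
    refine ⟨Set.univ, ?_, ?_⟩
    · intro v; simpa using hdeg v
    · intro u v huv
      simp only [Set.inter_univ]
      by_contra hlt
      push_neg at hlt
      set A := G.neighborSet u with hA
      set B := G.neighborSet v with hB
      have huA : u ∉ A := by simp [hA]
      have hvB : v ∉ B := by simp [hB]
      -- Step 1: A ∩ B has at least 2 elements
      have hinter : 2 ≤ (A ∩ B).ncard := by
        by_cases hadj : G.Adj u v
        · -- adjacent case: every neighbor of u other than v is a neighbor of v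
          have hsub : A \ {v} ⊆ A ∩ B := by
            rintro x ⟨hxA, hxv⟩
            simp only [Set.mem_singleton_iff] at hxv
            refine ⟨hxA, ?_⟩
            by_contra hxB
            -- then {u, v, x} ⊆ symmDiff A B, giving ncard ≥ 3
            have hxu : x ≠ u := fun h => huA (h ▸ hxA)
            have hsub3 : ({u, v, x} : Set V) ⊆ symmDiff A B := by
              rintro y (rfl | rfl | rfl)
              · exact Or.inr ⟨hadj.symm, huA⟩
              · exact Or.inl ⟨hadj, hvB⟩
              · exact Or.inl ⟨hxA, hxB⟩
            have h3card : ({u, v, x} : Set V).ncard = 3 := by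
              rw [Set.ncard_insert_of_notMem (by simp [huv, Ne.symm hxu]),
                Set.ncard_insert_of_notMem (by simp [Ne.symm hxv]), Set.ncard_singleton]
            have := Set.ncard_le_ncard hsub3 (Set.toFinite _)
            omega
          have h1 : (A \ {v}).ncard ≤ (A ∩ B).ncard :=
            Set.ncard_le_ncard hsub (Set.toFinite _)
          have h2 : A.ncard ≤ (A \ {v}).ncard + 1 := by
            have hsub2 : A ⊆ (A \ {v}) ∪ {v} := by
              intro x hx
              by_cases hxv : x = v
              · exact Or.inr (by simp [hxv])
              · exact Or.inl ⟨hx, by simp [hxv]⟩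
            calc A.ncard ≤ ((A \ {v}) ∪ {v}).ncard :=
                  Set.ncard_le_ncard hsub2 (Set.toFinite _)
              _ ≤ (A \ {v}).ncard + ({v} : Set V).ncard := Set.ncard_union_le _ _
              _ = (A \ {v}).ncard + 1 := by rw [Set.ncard_singleton]
          have := hdeg u
          rw [← hA] at this
          omega
        · -- nonadjacent case: counting
          have hdA : (A ∩ B).ncard + (A \ B).ncard = A.ncard :=
            Set.ncard_inter_add_ncard_diff_eq_ncard A B (Set.toFinite _)
          have hdB : (B ∩ A).ncard + (B \ A).ncard = B.ncard :=
            Set.ncard_inter_add_ncard_diff_eq_ncard B A (Set.toFinite _)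
          have hBA : (B ∩ A).ncard = (A ∩ B).ncard := by rw [Set.inter_comm]
          have hsd : (symmDiff A B).ncard = (A \ B).ncard + (B \ A).ncard := by
            rw [Set.symmDiff_def]
            exact Set.ncard_union_eq disjoint_sdiff_sdiff (Set.toFinite _) (Set.toFinite _)
          have hdu := hdeg u
          have hdv := hdeg v
          rw [← hA] at hdu
          rw [← hB] at hdv
          omega
      -- Step 2: pick two distinct common neighbors and build a 4-cycle
      obtain ⟨x, y, hx, hy, hxy⟩ := (Set.one_lt_ncard_iff (Set.toFinite _)).mp
        (by omega : 1 < (A ∩ B).ncard)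
      obtain ⟨hxA, hxB⟩ := hx
      obtain ⟨hyA, hyB⟩ := hy
      have haux : G.Adj u x := hxA
      have haxv : G.Adj v x := hxB
      have hauy : G.Adj u y := hyA
      have havy : G.Adj v y := hyB
      have := h4 u x v y (haux.ne) huv (hauy.ne) (haxv.ne') hxy (havy.ne)
        haux haxv.symm havy hauy.symm
      rw [← hA, ← hB] at this
      omega
end

section
/- Let G be a finite simple graph with minimum degree at least 3 such that for every 4-cycle subgraph on distinct vertices a, b, c, d (with edges ab, bc, cd, da) we have |N(a) △ N(c)| ≥ 3. Then the full vertex set V(G) is an ERR:OLD set for G. -/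
/-- If a finite simple graph has minimum degree at least 3 and `|N(a) △ N(c)| ≥ 3` for the
opposite corners of every 4-cycle subgraph, then the full vertex set is an ERR:OLD set. -/
theorem errOld_univ {V : Type*} [Fintype V] (G : SimpleGraph V)
    (hdeg : ∀ v : V, 3 ≤ (G.neighborSet v).ncard)
    (hC4 : ∀ a b c d : V, a ≠ b → a ≠ c → a ≠ d → b ≠ c → b ≠ d → c ≠ d →
      G.Adj a b → G.Adj b c → G.Adj c d → G.Adj d a →
      3 ≤ (symmDiff (G.neighborSet a) (G.neighborSet c)).ncard) :
    IsErrOld G (Set.univ : Set V) := by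
  classical
  constructor
  · intro v; simpa using hdeg v
  · intro u v huv
    simp only [Set.inter_univ]
    by_contra hlt
    push_neg at hlt
    set A := G.neighborSet u with hA
    set B := G.neighborSet v with hB
    have hsd : (symmDiff A B).ncard = (A \ B).ncard + (B \ A).ncard := by
      rw [Set.symmDiff_def, Set.ncard_union_eq disjoint_sdiff_sdiff]
    -- one of the differences has card ≤ 1
    have hcommon : 1 < (A ∩ B).ncard := by
      have hsum : (A \ B).ncard + (B \ A).ncard ≤ 2 := by omega
      rcases le_or_gt (A \ B).ncard 1 with h1 | h1
      · have := Set.ncard_inter_add_ncard_diff_eq_ncard A B (Set.toFinite A)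
        have hdu : 3 ≤ A.ncard := hdeg u
        omega
      · have h2 : (B \ A).ncard ≤ 1 := by omega
        have := Set.ncard_inter_add_ncard_diff_eq_ncard B A (Set.toFinite B)
        have hdv : 3 ≤ B.ncard := hdeg v
        rw [Set.inter_comm]
        omega
    rw [Set.one_lt_ncard_iff] at hcommon
    obtain ⟨b, d, hb, hd, hbd⟩ := hcommon
    have hub : G.Adj u b := hb.1
    have hvb : G.Adj v b := hb.2
    have hud : G.Adj u d := hd.1
    have hvd : G.Adj v d := hd.2
    have h3 : 3 ≤ (symmDiff A B).ncard := hC4 u b v d hub.ne huv hud.ne hvb.ne' hbd hvd.ne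
      hub hvb.symm hvd hud.symm
    omega
end

section
/- Let G be a finite simple graph containing no 4-cycle (C4-free). Then G has an ERR:OLD set if and only if the minimum degree of G is at least 3. -/
/-- A `C₄`-free finite simple graph has an ERR:OLD set iff its minimum degree is at least 3. -/
theorem errOld_exists_iff_of_c4Free {V : Type*} [Fintype V] (G : SimpleGraph V)
    (hC4free : ¬ ∃ a b c d : V, a ≠ b ∧ a ≠ c ∧ a ≠ d ∧ b ≠ c ∧ b ≠ d ∧ c ≠ d ∧
      G.Adj a b ∧ G.Adj b c ∧ G.Adj c d ∧ G.Adj d a) :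
    (∃ S : Set V, IsErrOld G S) ↔ (∀ v : V, 3 ≤ (G.neighborSet v).ncard) := by
  classical
  constructor
  · rintro ⟨S, hS, -⟩ v
    exact le_trans (hS v) (Set.ncard_le_ncard Set.inter_subset_left (Set.toFinite _))
  · intro hdeg
    refine ⟨Set.univ, ?_, ?_⟩
    · intro v; simpa using hdeg v
    · intro u v huv
      have hcommon : (G.neighborSet u ∩ G.neighborSet v).ncard ≤ 1 := by
        rw [Set.ncard_le_one_iff_eq]
        by_contra h
        push_neg at h
        obtain ⟨hne, h1⟩ := h
        obtain ⟨x, hx⟩ := hne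
        have : ∃ y ∈ G.neighborSet u ∩ G.neighborSet v, y ≠ x := by
          by_contra h2
          push_neg at h2
          exact h1 x (Set.eq_singleton_iff_unique_mem.mpr ⟨hx, h2⟩)
        obtain ⟨y, hy, hyx⟩ := this
        exact hC4free ⟨u, x, v, y, (hx.1 : G.Adj u x).ne, huv, (hy.1 : G.Adj u y).ne,
          (hx.2 : G.Adj v x).ne.symm, hyx.symm, (hy.2 : G.Adj v y).ne,
          hx.1, hx.2.symm, hy.2, hy.1.symm⟩
      set A := G.neighborSet u
      set B := G.neighborSet v
      have hA : A.Finite := Set.toFinite _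
      have hB : B.Finite := Set.toFinite _
      have hAd : (A ∩ B).ncard + (A \ B).ncard = A.ncard :=
        Set.ncard_inter_add_ncard_diff_eq_ncard A B hA
      have hBd : (B ∩ A).ncard + (B \ A).ncard = B.ncard :=
        Set.ncard_inter_add_ncard_diff_eq_ncard B A hB
      have hcomm : (B ∩ A).ncard = (A ∩ B).ncard := by rw [Set.inter_comm]
      have hsd : (symmDiff (A ∩ Set.univ) (B ∩ Set.univ)).ncard
          = (A \ B).ncard + (B \ A).ncard := by
        rw [Set.inter_univ, Set.inter_univ]
        rw [symmDiff_def]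
        exact Set.ncard_union_eq disjoint_sdiff_sdiff hA.diff hB.diff
      have h3A : 3 ≤ A.ncard := hdeg u
      have h3B : 3 ≤ B.ncard := hdeg v
      omega
end

section
/- Let G be a finite simple graph that is d-regular for some d ≥ 3. Then G has a DET:OLD set if and only if G has an ERR:OLD set. -/
/-- `S` is an error-detecting open-locating-dominating (DET:OLD) set for `G`:
every vertex is at least 2-dominated by `S` and every pair of distinct vertices
is 2#-distinguished by `S`. -/
def IsDetOld {V : Type*} (G : SimpleGraph V) (S : Set V) : Prop :=
  (∀ v : V, 2 ≤ (G.neighborSet v ∩ S).ncard) ∧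
  (∀ u v : V, u ≠ v →
    2 ≤ ((G.neighborSet u ∩ S) \ (G.neighborSet v ∩ S)).ncard ∨
    2 ≤ ((G.neighborSet v ∩ S) \ (G.neighborSet u ∩ S)).ncard)

lemma symmDiff_ncard_eq {V : Type*} [Fintype V] (A B : Set V) :
    (symmDiff A B).ncard = (A \ B).ncard + (B \ A).ncard := by
  rw [Set.symmDiff_def, Set.ncard_union_eq disjoint_sdiff_sdiff]

/-- A `d`-regular finite simple graph with `d ≥ 3` has a DET:OLD set iff it has an
ERR:OLD set. -/
theorem detOld_iff_errOld_of_regular {V : Type*} [Fintype V] (G : SimpleGraph V) (d : ℕ)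
    (hd : 3 ≤ d) (hreg : ∀ v : V, (G.neighborSet v).ncard = d) :
    (∃ S : Set V, IsDetOld G S) ↔ (∃ S : Set V, IsErrOld G S) := by
  constructor
  · rintro ⟨S, hdom, hdist⟩
    refine ⟨Set.univ, ?_, ?_⟩
    · intro v
      rw [Set.inter_univ, hreg v]; omega
    · intro u v huv
      simp only [Set.inter_univ]
      -- |N(u)\N(v)| = |N(v)\N(u)| since both neighborhoods have size d
      have heq : ((G.neighborSet u) \ (G.neighborSet v)).ncard
          = ((G.neighborSet v) \ (G.neighborSet u)).ncard := by
        rw [← Set.ncard_eq_ncard_iff_ncard_diff_eq_ncard_diff, hreg u, hreg v]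
      have hsub1 : (G.neighborSet u ∩ S) \ (G.neighborSet v ∩ S)
          ⊆ (G.neighborSet u) \ (G.neighborSet v) := by
        rintro x ⟨⟨hx1, hx2⟩, hx3⟩
        exact ⟨hx1, fun h => hx3 ⟨h, hx2⟩⟩
      have hsub2 : (G.neighborSet v ∩ S) \ (G.neighborSet u ∩ S)
          ⊆ (G.neighborSet v) \ (G.neighborSet u) := by
        rintro x ⟨⟨hx1, hx2⟩, hx3⟩
        exact ⟨hx1, fun h => hx3 ⟨h, hx2⟩⟩
      rw [symmDiff_ncard_eq]
      rcases hdist u v huv with h | h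
      · have := le_trans h (Set.ncard_le_ncard hsub1 (Set.toFinite _))
        omega
      · have := le_trans h (Set.ncard_le_ncard hsub2 (Set.toFinite _))
        omega
  · rintro ⟨S, hdom, hdist⟩
    refine ⟨S, fun v => by have := hdom v; omega, fun u v huv => ?_⟩
    have h3 := hdist u v huv
    rw [symmDiff_ncard_eq] at h3
    omega
end

section
/- Let G be a finite simple cubic graph (every vertex has degree 3). Then G has an ERR:OLD set if and only if G is C4-free. -/
/-- A cubic finite simple graph has an ERR:OLD set iff it is `C₄`-free. -/
theorem errOld_exists_iff_c4Free_of_cubic {V : Type*} [Fintype V] (G : SimpleGraph V)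
    (hcubic : ∀ v : V, (G.neighborSet v).ncard = 3) :
    (∃ S : Set V, IsErrOld G S) ↔
      ¬ ∃ a b c d : V, a ≠ b ∧ a ≠ c ∧ a ≠ d ∧ b ≠ c ∧ b ≠ d ∧ c ≠ d ∧
        G.Adj a b ∧ G.Adj b c ∧ G.Adj c d ∧ G.Adj d a := by
  classical
  constructor
  · rintro ⟨S, hS1, hS2⟩ ⟨a, b, c, d, hab', hac, had, hbc', hbd, hcd', hab, hbc, hcd, hda⟩
    -- every neighborhood is contained in S
    have hNS : ∀ v : V, G.neighborSet v ∩ S = G.neighborSet v := fun v =>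
      Set.eq_of_subset_of_ncard_le Set.inter_subset_left
        (by rw [hcubic]; exact hS1 v) (Set.toFinite _)
    have h3 := hS2 a c hac
    rw [hNS, hNS] at h3
    have hbNa : b ∈ G.neighborSet a := hab
    have hbNc : b ∈ G.neighborSet c := hbc.symm
    have hdNa : d ∈ G.neighborSet a := hda.symm
    have hdNc : d ∈ G.neighborSet c := hcd
    have hsub : ∀ u w : V, b ∈ G.neighborSet w → d ∈ G.neighborSet w →
        b ∈ G.neighborSet u → d ∈ G.neighborSet u →
        (G.neighborSet u \ G.neighborSet w).ncard ≤ 1 := by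
      intro u w hbw hdw hbu hdu
      have hsub1 : G.neighborSet u \ G.neighborSet w ⊆ G.neighborSet u \ {b, d} := by
        rintro x ⟨hx1, hx2⟩
        refine ⟨hx1, ?_⟩
        rintro (rfl | rfl)
        · exact hx2 hbw
        · exact hx2 hdw
      have hcard : (G.neighborSet u \ ({b, d} : Set V)).ncard = 1 := by
        rw [Set.ncard_diff (by rintro x (rfl | rfl); exacts [hbu, hdu]) (Set.toFinite _),
          hcubic, Set.ncard_pair hbd]
      calc (G.neighborSet u \ G.neighborSet w).ncard
          ≤ (G.neighborSet u \ ({b, d} : Set V)).ncard :=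
            Set.ncard_le_ncard hsub1 (Set.toFinite _)
        _ = 1 := hcard
    have h1 := hsub a c hbNc hdNc hbNa hdNa
    have h2 := hsub c a hbNa hdNa hbNc hdNc
    rw [symmDiff_def] at h3
    have := Set.ncard_union_le (G.neighborSet a \ G.neighborSet c)
      (G.neighborSet c \ G.neighborSet a)
    simp only [Set.sup_eq_union] at h3
    omega
  · intro hC4
    refine ⟨Set.univ, fun v => by rw [Set.inter_univ, hcubic], fun u v huv => ?_⟩
    rw [Set.inter_univ, Set.inter_univ]
    by_contra hlt
    push_neg at hlt
    -- show |N(u) ∩ N(v)| ≥ 2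
    have hdisj : Disjoint (G.neighborSet u \ G.neighborSet v)
        (G.neighborSet v \ G.neighborSet u) := disjoint_sdiff_sdiff
    have hsd : (symmDiff (G.neighborSet u) (G.neighborSet v)).ncard =
        (G.neighborSet u \ G.neighborSet v).ncard +
        (G.neighborSet v \ G.neighborSet u).ncard := by
      rw [symmDiff_def]
      exact Set.ncard_union_eq hdisj (Set.toFinite _) (Set.toFinite _)
    have h1 := Set.ncard_inter_add_ncard_diff_eq_ncard (G.neighborSet u) (G.neighborSet v)
      (Set.toFinite _)
    have h2 := Set.ncard_inter_add_ncard_diff_eq_ncard (G.neighborSet v) (G.neighborSet u)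
      (Set.toFinite _)
    rw [hcubic] at h1 h2
    rw [Set.inter_comm] at h2
    have hk : 1 < (G.neighborSet u ∩ G.neighborSet v).ncard := by omega
    obtain ⟨b, hb, d, hd, hbd⟩ := (Set.one_lt_ncard (Set.toFinite _)).mp hk
    obtain ⟨hbu, hbv⟩ := hb
    obtain ⟨hdu, hdv⟩ := hd
    exact hC4 ⟨u, b, v, d, G.ne_of_adj hbu, huv, G.ne_of_adj hdu,
      (G.ne_of_adj hbv).symm, hbd, G.ne_of_adj hdv,
      hbu, hbv.symm, hdv, hdu.symm⟩
end

section
/- Let G be a finite simple graph that is cubic (every vertex has degree 3) or quasi-cubic (exactly one vertex has degree 4 and every other vertex has degree 3). Then G has an ERR:OLD set if and only if G is C4-free. -/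
/-- A cubic or quasi-cubic finite simple graph has an ERR:OLD set iff it is `C₄`-free. -/
theorem errOld_exists_iff_c4Free_of_cubic_or_quasiCubic {V : Type*} [Fintype V]
    (G : SimpleGraph V)
    (hdeg : (∀ v : V, (G.neighborSet v).ncard = 3) ∨
      (∃ w : V, (G.neighborSet w).ncard = 4 ∧
        ∀ v : V, v ≠ w → (G.neighborSet v).ncard = 3)) :
    (∃ S : Set V, IsErrOld G S) ↔
      ¬ ∃ a b c d : V, a ≠ b ∧ a ≠ c ∧ a ≠ d ∧ b ≠ c ∧ b ≠ d ∧ c ≠ d ∧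
        G.Adj a b ∧ G.Adj b c ∧ G.Adj c d ∧ G.Adj d a := by
  constructor
  · rintro ⟨S, hdom, hdist⟩ ⟨a, b, c, d, hab, hac, had, hbc, hbd, hcd, Aab, Abc, Acd, Ada⟩
    -- every cubic vertex has all its neighbors in S
    have hsubS : ∀ v : V, (G.neighborSet v).ncard = 3 → G.neighborSet v ⊆ S := by
      intro v hv
      have h1 : G.neighborSet v ∩ S = G.neighborSet v :=
        Set.eq_of_subset_of_ncard_le Set.inter_subset_left
          (by rw [hv]; exact hdom v) (Set.toFinite _)
      rw [← h1]; exact Set.inter_subset_right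
    have key : ∀ u v x y : V, u ≠ v → x ≠ y →
        (G.neighborSet u).ncard = 3 → (G.neighborSet v).ncard = 3 →
        G.Adj u x → G.Adj v x → G.Adj u y → G.Adj v y → False := by
      intro u v x y huv hxy hu hv aux avx auy avy
      have hSu : G.neighborSet u ∩ S = G.neighborSet u :=
        Set.inter_eq_left.mpr (hsubS u hu)
      have hSv : G.neighborSet v ∩ S = G.neighborSet v :=
        Set.inter_eq_left.mpr (hsubS v hv)
      have h3 := hdist u v huv
      rw [hSu, hSv] at h3
      have hsub : symmDiff (G.neighborSet u) (G.neighborSet v) ⊆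
          (G.neighborSet u \ {x, y}) ∪ (G.neighborSet v \ {x, y}) := by
        intro z hz
        rcases Set.mem_symmDiff.mp hz with ⟨h1, h2⟩ | ⟨h1, h2⟩
        · refine Or.inl ⟨h1, ?_⟩
          intro hz'
          simp only [Set.mem_insert_iff, Set.mem_singleton_iff] at hz'
          rcases hz' with rfl | rfl
          exacts [h2 ((G.mem_neighborSet v z).mpr avx), h2 ((G.mem_neighborSet v z).mpr avy)]
        · refine Or.inr ⟨h1, ?_⟩
          intro hz'
          simp only [Set.mem_insert_iff, Set.mem_singleton_iff] at hz'
          rcases hz' with rfl | rfl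
          exacts [h2 ((G.mem_neighborSet u z).mpr aux), h2 ((G.mem_neighborSet u z).mpr auy)]
      have hxyu : ({x, y} : Set V) ⊆ G.neighborSet u := by
        intro z hz
        simp only [Set.mem_insert_iff, Set.mem_singleton_iff] at hz
        rcases hz with rfl | rfl
        exacts [(G.mem_neighborSet u z).mpr aux, (G.mem_neighborSet u z).mpr auy]
      have hxyv : ({x, y} : Set V) ⊆ G.neighborSet v := by
        intro z hz
        simp only [Set.mem_insert_iff, Set.mem_singleton_iff] at hz
        rcases hz with rfl | rfl
        exacts [(G.mem_neighborSet v z).mpr avx, (G.mem_neighborSet v z).mpr avy]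
      have c1 : (G.neighborSet u \ {x, y}).ncard = 1 := by
        rw [Set.ncard_diff hxyu (Set.toFinite _), Set.ncard_pair hxy, hu]
      have c2 : (G.neighborSet v \ {x, y}).ncard = 1 := by
        rw [Set.ncard_diff hxyv (Set.toFinite _), Set.ncard_pair hxy, hv]
      have hle : (symmDiff (G.neighborSet u) (G.neighborSet v)).ncard ≤ 2 := by
        calc (symmDiff (G.neighborSet u) (G.neighborSet v)).ncard
            ≤ ((G.neighborSet u \ {x, y}) ∪ (G.neighborSet v \ {x, y})).ncard :=
              Set.ncard_le_ncard hsub (Set.toFinite _)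
          _ ≤ (G.neighborSet u \ {x, y}).ncard + (G.neighborSet v \ {x, y}).ncard :=
              Set.ncard_union_le _ _
          _ ≤ 2 := by rw [c1, c2]
      omega
    rcases hdeg with h3 | ⟨w, hw4, hw3⟩
    · exact key a c b d hac hbd (h3 a) (h3 c) Aab Abc.symm Ada.symm Acd
    · by_cases ha : a = w
      · exact key b d a c hbd hac (hw3 b (ha ▸ hab.symm)) (hw3 d (ha ▸ had.symm))
          Aab.symm Ada Abc Acd.symm
      · by_cases hc : c = w
        · exact key b d a c hbd hac (hw3 b (hc ▸ hbc)) (hw3 d (hc ▸ hcd.symm))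
            Aab.symm Ada Abc Acd.symm
        · exact key a c b d hac hbd (hw3 a ha) (hw3 c hc) Aab Abc.symm Ada.symm Acd
  · intro hC4
    have hdeg3 : ∀ v : V, 3 ≤ (G.neighborSet v).ncard := by
      intro v
      rcases hdeg with h | ⟨w, hw4, hw3⟩
      · rw [h v]
      · by_cases hv : v = w
        · rw [hv, hw4]; omega
        · rw [hw3 v hv]
    refine ⟨Set.univ, ?_, ?_⟩
    · intro v; rw [Set.inter_univ]; exact hdeg3 v
    · intro u v huv
      simp only [Set.inter_univ]
      have hI : (G.neighborSet u ∩ G.neighborSet v).ncard ≤ 1 := by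
        by_contra h
        push_neg at h
        obtain ⟨x, y, hx, hy, hxy⟩ := (Set.one_lt_ncard_iff (Set.toFinite _)).mp h
        have aux : G.Adj u x := hx.1
        have avx : G.Adj v x := hx.2
        have auy : G.Adj u y := hy.1
        have avy : G.Adj v y := hy.2
        exact hC4 ⟨u, x, v, y, G.ne_of_adj aux, huv, G.ne_of_adj auy,
          (G.ne_of_adj avx).symm, hxy, G.ne_of_adj avy, aux, avx.symm, avy, auy.symm⟩
      have e1 : G.neighborSet u \ G.neighborSet v =
          G.neighborSet u \ (G.neighborSet u ∩ G.neighborSet v) := by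
        ext z; simp only [Set.mem_diff, Set.mem_inter_iff]; tauto
      have e2 : G.neighborSet v \ G.neighborSet u =
          G.neighborSet v \ (G.neighborSet u ∩ G.neighborSet v) := by
        ext z; simp only [Set.mem_diff, Set.mem_inter_iff]; tauto
      have c1 : 2 ≤ (G.neighborSet u \ G.neighborSet v).ncard := by
        rw [e1, Set.ncard_diff Set.inter_subset_left (Set.toFinite _)]
        have := hdeg3 u; omega
      have c2 : 2 ≤ (G.neighborSet v \ G.neighborSet u).ncard := by
        rw [e2, Set.ncard_diff Set.inter_subset_right (Set.toFinite _)]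
        have := hdeg3 v; omega
      have hdisj : Disjoint (G.neighborSet u \ G.neighborSet v)
          (G.neighborSet v \ G.neighborSet u) := by
        rw [Set.disjoint_left]
        intro z h1 h2
        exact h1.2 h2.1
      rw [Set.symmDiff_def, Set.ncard_union_eq hdisj (Set.toFinite _) (Set.toFinite _)]
      omega
end

section
/- Let G be a finite simple cubic graph that has an ERR:OLD set, and let a, b, c, d be distinct vertices with ab, cd ∈ E(G) such that neither edge ab nor edge cd lies in a triangle of G, and ab and cd are not the terminal edges of any path on five vertices in G (i.e., there is no path v1 v2 v3 v4 v5 in G whose first edge v1v2 is ab and whose last edge v4v5 is cd). Let G' be the graph obtained from G by deleting the edges ab and cd and adding a new vertex x adjacent exactly to a, b, c, and d. Then G' has an ERR:OLD set. -/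
/-- The graph obtained from `G` by deleting the edges `ab` and `cd` and adding a new
vertex (`none`) adjacent exactly to `a`, `b`, `c`, and `d`. -/
def quasiCubicExt {V : Type*} (G : SimpleGraph V) (a b c d : V) :
    SimpleGraph (Option V) :=
  SimpleGraph.fromRel (fun x y =>
    match x, y with
    | some u, some v => G.Adj u v ∧ ¬((u = a ∧ v = b) ∨ (u = b ∧ v = a)) ∧
        ¬((u = c ∧ v = d) ∨ (u = d ∧ v = c))
    | none, some v => v = a ∨ v = b ∨ v = c ∨ v = d
    | _, none => False)

private lemma three_le_ncard_of_mem {α : Type*} {s : Set α} (hs : s.Finite)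
    {x y z : α} (hxy : x ≠ y) (hxz : x ≠ z) (hyz : y ≠ z)
    (hx : x ∈ s) (hy : y ∈ s) (hz : z ∈ s) : 3 ≤ s.ncard := by
  have h3 : ({x, y, z} : Set α).ncard = 3 :=
    Set.ncard_eq_three.mpr ⟨x, y, z, hxy, hxz, hyz, rfl⟩
  calc (3:ℕ) = ({x, y, z} : Set α).ncard := h3.symm
    _ ≤ s.ncard := Set.ncard_le_ncard (by
        intro w hw
        simp only [Set.mem_insert_iff, Set.mem_singleton_iff] at hw
        rcases hw with rfl | rfl | rfl <;> assumption) hs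

private lemma symmDiff_image_some {α : Type*} (s t : Set α) :
    symmDiff ((some : α → Option α) '' s) (some '' t) = some '' (symmDiff s t) := by
  ext z
  cases z with
  | none => simp [Set.mem_symmDiff]
  | some w => simp [Set.mem_symmDiff]

private lemma symmDiff_insert_insert {α : Type*} {x : α} {s t : Set α}
    (hs : x ∉ s) (ht : x ∉ t) :
    symmDiff (insert x s) (insert x t) = symmDiff s t := by
  ext z
  by_cases hz : z = x
  · subst hz; simp [Set.mem_symmDiff, hs, ht]
  · simp only [Set.mem_symmDiff, Set.mem_insert_iff, hz, false_or]

private lemma symmDiff_insert_right {α : Type*} {x : α} {s t : Set α}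
    (hs : x ∉ s) (ht : x ∉ t) :
    symmDiff s (insert x t) = insert x (symmDiff s t) := by
  ext z
  by_cases hz : z = x
  · subst hz; simp [Set.mem_symmDiff, hs, ht]
  · simp only [Set.mem_symmDiff, Set.mem_insert_iff, hz, false_or]

private lemma diff_singleton_symmDiff_subset {α : Type*} (s t : Set α) (e : α) :
    (symmDiff s t) \ {e} ⊆ symmDiff s (t \ {e}) := by
  intro z hz
  simp only [Set.mem_diff, Set.mem_singleton_iff, Set.mem_symmDiff] at *
  tauto

private lemma two_le_ncard_diff {α : Type*} {s : Set α} (hs : s.Finite) (e : α)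
    (h : 3 ≤ s.ncard) : 2 ≤ (s \ {e}).ncard := by
  have h1 : s ⊆ insert e (s \ {e}) := by
    intro z hz; by_cases hz' : z = e <;> simp [hz', hz]
  have h2 := Set.ncard_le_ncard h1 (Set.Finite.insert _ hs.diff)
  have h3 := Set.ncard_insert_le e (s \ {e})
  omega

section Adj
variable {V : Type*} (G : SimpleGraph V) (a b c d : V)

private lemma adj_ss (u v : V) : (quasiCubicExt G a b c d).Adj (some u) (some v) ↔
    (G.Adj u v ∧ ¬((u = a ∧ v = b) ∨ (u = b ∧ v = a)) ∧
      ¬((u = c ∧ v = d) ∨ (u = d ∧ v = c))) := by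
  simp only [quasiCubicExt, SimpleGraph.fromRel_adj]
  constructor
  · rintro ⟨hne, h | h⟩
    · exact h
    · exact ⟨h.1.symm, by tauto, by tauto⟩
  · intro h
    exact ⟨by simp [h.1.ne], Or.inl h⟩

private lemma adj_sn (u : V) : (quasiCubicExt G a b c d).Adj (some u) none ↔
    (u = a ∨ u = b ∨ u = c ∨ u = d) := by
  simp only [quasiCubicExt, SimpleGraph.fromRel_adj]
  constructor
  · rintro ⟨hne, h | h⟩
    · exact h.elim
    · exact h
  · intro h
    exact ⟨by simp, Or.inr h⟩

private lemma adj_ns (u : V) : (quasiCubicExt G a b c d).Adj none (some u) ↔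
    (u = a ∨ u = b ∨ u = c ∨ u = d) := by
  rw [SimpleGraph.adj_comm]; exact adj_sn G a b c d u

private lemma nbr_out {u : V} (hua : u ≠ a) (hub : u ≠ b) (huc : u ≠ c) (hud : u ≠ d) :
    (quasiCubicExt G a b c d).neighborSet (some u) = some '' (G.neighborSet u) := by
  ext z
  cases z with
  | none =>
    simp only [SimpleGraph.mem_neighborSet, adj_sn, hua, hub, huc, hud]
    simp
  | some w =>
    rw [SimpleGraph.mem_neighborSet, adj_ss]
    simp [hua, hub, huc, hud]

private lemma nbr_in {u e : V} (hue : u ≠ e)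
    (h1 : (u = a ∧ e = b) ∨ (u = b ∧ e = a) ∨ (u = c ∧ e = d) ∨ (u = d ∧ e = c))
    (hab : a ≠ b) (hac : a ≠ c) (had : a ≠ d) (hbc : b ≠ c) (hbd : b ≠ d) (hcd : c ≠ d) :
    (quasiCubicExt G a b c d).neighborSet (some u) =
      insert none (some '' (G.neighborSet u \ {e})) := by
  ext z
  cases z with
  | none =>
    have hu : (u = a ∨ u = b ∨ u = c ∨ u = d) := by tauto
    simp [SimpleGraph.mem_neighborSet, adj_sn, hu]
  | some w =>
    rw [SimpleGraph.mem_neighborSet, adj_ss]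
    rcases h1 with ⟨rfl, rfl⟩ | ⟨rfl, rfl⟩ | ⟨rfl, rfl⟩ | ⟨rfl, rfl⟩ <;>
      simp_all [ne_comm] <;> tauto

private lemma nbr_none :
    (quasiCubicExt G a b c d).neighborSet none =
      {some a, some b, some c, some d} := by
  ext z
  cases z with
  | none => simp [SimpleGraph.mem_neighborSet]
  | some w =>
    rw [SimpleGraph.mem_neighborSet, adj_ns]
    simp

end Adj


/-- If `G` is a cubic graph with an ERR:OLD set, `ab` and `cd` are edges on four distinct
vertices, neither edge lies in a triangle, and `ab`, `cd` are not the terminal edges of a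
path on five vertices, then the quasi-cubic graph `G'` obtained by deleting `ab` and `cd`
and adding a new vertex adjacent exactly to `a`, `b`, `c`, `d` has an ERR:OLD set. -/
theorem quasiCubicExt_errOld {V : Type*} [Fintype V] (G : SimpleGraph V)
    (hcubic : ∀ v : V, (G.neighborSet v).ncard = 3)
    (hG : ∃ S : Set V, IsErrOld G S)
    (a b c d : V)
    (hab : a ≠ b) (hac : a ≠ c) (had : a ≠ d) (hbc : b ≠ c) (hbd : b ≠ d) (hcd : c ≠ d)
    (eab : G.Adj a b) (ecd : G.Adj c d)
    (htri_ab : ¬ ∃ w : V, G.Adj a w ∧ G.Adj b w)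
    (htri_cd : ¬ ∃ w : V, G.Adj c w ∧ G.Adj d w)
    (hP5 : ¬ ∃ v₁ v₂ v₃ v₄ v₅ : V,
      v₁ ≠ v₂ ∧ v₁ ≠ v₃ ∧ v₁ ≠ v₄ ∧ v₁ ≠ v₅ ∧ v₂ ≠ v₃ ∧ v₂ ≠ v₄ ∧ v₂ ≠ v₅ ∧
      v₃ ≠ v₄ ∧ v₃ ≠ v₅ ∧ v₄ ≠ v₅ ∧
      G.Adj v₁ v₂ ∧ G.Adj v₂ v₃ ∧ G.Adj v₃ v₄ ∧ G.Adj v₄ v₅ ∧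
      ((v₁ = a ∧ v₂ = b) ∨ (v₁ = b ∧ v₂ = a)) ∧
      ((v₄ = c ∧ v₅ = d) ∨ (v₄ = d ∧ v₅ = c))) :
    ∃ S : Set (Option V), IsErrOld (quasiCubicExt G a b c d) S := by
  classical
  obtain ⟨S, hdom, hdis⟩ := hG
  -- In a cubic graph, 3-domination forces N(v) ∩ S = N(v)
  have hNS : ∀ v : V, G.neighborSet v ∩ S = G.neighborSet v := fun v =>
    Set.eq_of_subset_of_ncard_le Set.inter_subset_left (by rw [hcubic v]; exact hdom v)
  have hdist : ∀ u v : V, u ≠ v →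
      3 ≤ (symmDiff (G.neighborSet u) (G.neighborSet v)).ncard := by
    intro u v huv
    have := hdis u v huv
    rwa [hNS, hNS] at this
  set G' := quasiCubicExt G a b c d with hG'def
  -- neighbor set descriptions
  have nA : G'.neighborSet (some a) = insert none (some '' (G.neighborSet a \ {b})) :=
    nbr_in G a b c d hab (Or.inl ⟨rfl, rfl⟩) hab hac had hbc hbd hcd
  have nB : G'.neighborSet (some b) = insert none (some '' (G.neighborSet b \ {a})) :=
    nbr_in G a b c d hab.symm (Or.inr (Or.inl ⟨rfl, rfl⟩)) hab hac had hbc hbd hcd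
  have nC : G'.neighborSet (some c) = insert none (some '' (G.neighborSet c \ {d})) :=
    nbr_in G a b c d hcd (Or.inr (Or.inr (Or.inl ⟨rfl, rfl⟩))) hab hac had hbc hbd hcd
  have nD : G'.neighborSet (some d) = insert none (some '' (G.neighborSet d \ {c})) :=
    nbr_in G a b c d hcd.symm (Or.inr (Or.inr (Or.inr ⟨rfl, rfl⟩))) hab hac had hbc hbd hcd
  have nO : ∀ u : V, u ≠ a → u ≠ b → u ≠ c → u ≠ d →
      G'.neighborSet (some u) = some '' (G.neighborSet u) := fun u h1 h2 h3 h4 =>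
    nbr_out G a b c d h1 h2 h3 h4
  have nN : G'.neighborSet none = {some a, some b, some c, some d} := nbr_none G a b c d
  -- disjointness facts
  have dAB : (G.neighborSet a \ {b}) ∩ (G.neighborSet b \ {a}) = ∅ := by
    ext w
    simp only [Set.mem_inter_iff, Set.mem_diff, Set.mem_singleton_iff,
      SimpleGraph.mem_neighborSet, Set.mem_empty_iff_false, iff_false]
    rintro ⟨⟨h1, -⟩, h2, -⟩
    exact htri_ab ⟨w, h1, h2⟩
  have dCD : (G.neighborSet c \ {d}) ∩ (G.neighborSet d \ {c}) = ∅ := by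
    ext w
    simp only [Set.mem_inter_iff, Set.mem_diff, Set.mem_singleton_iff,
      SimpleGraph.mem_neighborSet, Set.mem_empty_iff_false, iff_false]
    rintro ⟨⟨h1, -⟩, h2, -⟩
    exact htri_cd ⟨w, h1, h2⟩
  have dAC : (G.neighborSet a \ {b}) ∩ (G.neighborSet c \ {d}) = ∅ := by
    ext w
    simp only [Set.mem_inter_iff, Set.mem_diff, Set.mem_singleton_iff,
      SimpleGraph.mem_neighborSet, Set.mem_empty_iff_false, iff_false]
    rintro ⟨⟨h1, hwb⟩, h2, hwd⟩
    exact hP5 ⟨b, a, w, c, d, hab.symm, Ne.symm hwb, hbc, hbd, h1.ne, hac, had,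
      h2.ne.symm, hwd, hcd, eab.symm, h1, h2.symm, ecd,
      Or.inr ⟨rfl, rfl⟩, Or.inl ⟨rfl, rfl⟩⟩
  have dAD : (G.neighborSet a \ {b}) ∩ (G.neighborSet d \ {c}) = ∅ := by
    ext w
    simp only [Set.mem_inter_iff, Set.mem_diff, Set.mem_singleton_iff,
      SimpleGraph.mem_neighborSet, Set.mem_empty_iff_false, iff_false]
    rintro ⟨⟨h1, hwb⟩, h2, hwc⟩
    exact hP5 ⟨b, a, w, d, c, hab.symm, Ne.symm hwb, hbd, hbc, h1.ne, had, hac,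
      h2.ne.symm, hwc, hcd.symm, eab.symm, h1, h2.symm, ecd.symm,
      Or.inr ⟨rfl, rfl⟩, Or.inr ⟨rfl, rfl⟩⟩
  have dBC : (G.neighborSet b \ {a}) ∩ (G.neighborSet c \ {d}) = ∅ := by
    ext w
    simp only [Set.mem_inter_iff, Set.mem_diff, Set.mem_singleton_iff,
      SimpleGraph.mem_neighborSet, Set.mem_empty_iff_false, iff_false]
    rintro ⟨⟨h1, hwa⟩, h2, hwd⟩
    exact hP5 ⟨a, b, w, c, d, hab, Ne.symm hwa, hac, had, h1.ne, hbc, hbd,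
      h2.ne.symm, hwd, hcd, eab, h1, h2.symm, ecd,
      Or.inl ⟨rfl, rfl⟩, Or.inl ⟨rfl, rfl⟩⟩
  have dBD : (G.neighborSet b \ {a}) ∩ (G.neighborSet d \ {c}) = ∅ := by
    ext w
    simp only [Set.mem_inter_iff, Set.mem_diff, Set.mem_singleton_iff,
      SimpleGraph.mem_neighborSet, Set.mem_empty_iff_false, iff_false]
    rintro ⟨⟨h1, hwa⟩, h2, hwc⟩
    exact hP5 ⟨a, b, w, d, c, hab, Ne.symm hwa, had, hac, h1.ne, hbd, hbc,
      h2.ne.symm, hwc, hcd.symm, eab, h1, h2.symm, ecd.symm,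
      Or.inl ⟨rfl, rfl⟩, Or.inr ⟨rfl, rfl⟩⟩
  -- key lemma for pairs inside Q
  have key3 : ∀ v1 e1 v2 e2 : V, e1 ∈ G.neighborSet v1 → e2 ∈ G.neighborSet v2 →
      (G.neighborSet v1 \ {e1}) ∩ (G.neighborSet v2 \ {e2}) = ∅ →
      3 ≤ (symmDiff (G.neighborSet v1 \ {e1}) (G.neighborSet v2 \ {e2})).ncard := by
    intro v1 e1 v2 e2 h1 h2 hdisj
    have hA : (G.neighborSet v1 \ {e1}).ncard = 2 := by
      rw [Set.ncard_diff_singleton_of_mem h1, hcubic v1]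
    have hC : (G.neighborSet v2 \ {e2}).ncard = 2 := by
      rw [Set.ncard_diff_singleton_of_mem h2, hcubic v2]
    obtain ⟨x, y, hxy, hxyeq⟩ := Set.ncard_eq_two.mp hA
    have hCne : (G.neighborSet v2 \ {e2}).Nonempty := by
      apply Set.nonempty_of_ncard_ne_zero; omega
    obtain ⟨z, hz⟩ := hCne
    have hx : x ∈ G.neighborSet v1 \ {e1} := by rw [hxyeq]; exact Or.inl rfl
    have hy : y ∈ G.neighborSet v1 \ {e1} := by rw [hxyeq]; exact Or.inr rfl
    have hxz : x ≠ z := fun h => by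
      rw [← Set.mem_empty_iff_false x, ← hdisj]; exact ⟨hx, h ▸ hz⟩
    have hyz : y ≠ z := fun h => by
      rw [← Set.mem_empty_iff_false y, ← hdisj]; exact ⟨hy, h ▸ hz⟩
    have hxC : x ∉ G.neighborSet v2 \ {e2} := fun h => by
      rw [← Set.mem_empty_iff_false x, ← hdisj]; exact ⟨hx, h⟩
    have hyC : y ∉ G.neighborSet v2 \ {e2} := fun h => by
      rw [← Set.mem_empty_iff_false y, ← hdisj]; exact ⟨hy, h⟩
    have hzA : z ∉ G.neighborSet v1 \ {e1} := fun h => by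
      rw [← Set.mem_empty_iff_false z, ← hdisj]; exact ⟨h, hz⟩
    exact three_le_ncard_of_mem (Set.toFinite _) hxy hxz hyz
      (Set.mem_symmDiff.mpr (Or.inl ⟨hx, hxC⟩))
      (Set.mem_symmDiff.mpr (Or.inl ⟨hy, hyC⟩))
      (Set.mem_symmDiff.mpr (Or.inr ⟨hz, hzA⟩))
  have pairQ : ∀ v1 e1 v2 e2 : V, e1 ∈ G.neighborSet v1 → e2 ∈ G.neighborSet v2 →
      (G.neighborSet v1 \ {e1}) ∩ (G.neighborSet v2 \ {e2}) = ∅ →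
      3 ≤ (symmDiff (insert none (some '' (G.neighborSet v1 \ {e1})))
        (insert none (some '' (G.neighborSet v2 \ {e2})))).ncard := by
    intro v1 e1 v2 e2 h1 h2 hdisj
    rw [symmDiff_insert_insert (by simp) (by simp), symmDiff_image_some,
      Set.ncard_image_of_injective _ (Option.some_injective V)]
    exact key3 v1 e1 v2 e2 h1 h2 hdisj
  -- key lemma: one vertex outside Q, one inside
  have key2 : ∀ u v e : V, u ≠ v →
      3 ≤ (symmDiff ((some : V → Option V) '' (G.neighborSet u))
        (insert none (some '' (G.neighborSet v \ {e})))).ncard := by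
    intro u v e huv
    rw [symmDiff_insert_right (by simp) (by simp),
      Set.ncard_insert_of_notMem (by
        rw [symmDiff_image_some]; simp),
      symmDiff_image_some, Set.ncard_image_of_injective _ (Option.some_injective V)]
    have h2 : 2 ≤ (symmDiff (G.neighborSet u) (G.neighborSet v \ {e})).ncard :=
      le_trans (two_le_ncard_diff (Set.toFinite _) e (hdist u v huv))
        (Set.ncard_le_ncard (diff_singleton_symmDiff_subset _ _ e) (Set.toFinite _))
    omega
  -- main none-vs-some lemma
  have hnone : ∀ u : V,
      3 ≤ (symmDiff (G'.neighborSet none) (G'.neighborSet (some u))).ncard := by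
    intro u
    by_cases hua : u = a
    · rw [hua, nN, nA]
      apply three_le_ncard_of_mem (Set.toFinite _) (x := some a) (y := some b)
        (z := (none : Option V))
      · simp [hab]
      · simp
      · simp
      · exact Set.mem_symmDiff.mpr (Or.inl ⟨by simp, by simp⟩)
      · exact Set.mem_symmDiff.mpr (Or.inl ⟨by simp, by simp⟩)
      · exact Set.mem_symmDiff.mpr (Or.inr ⟨by simp, by simp⟩)
    by_cases hub : u = b
    · rw [hub, nN, nB]
      apply three_le_ncard_of_mem (Set.toFinite _) (x := some a) (y := some b)
        (z := (none : Option V))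
      · simp [hab]
      · simp
      · simp
      · exact Set.mem_symmDiff.mpr (Or.inl ⟨by simp, by simp⟩)
      · exact Set.mem_symmDiff.mpr (Or.inl ⟨by simp, by simp⟩)
      · exact Set.mem_symmDiff.mpr (Or.inr ⟨by simp, by simp⟩)
    by_cases huc : u = c
    · rw [huc, nN, nC]
      apply three_le_ncard_of_mem (Set.toFinite _) (x := some c) (y := some d)
        (z := (none : Option V))
      · simp [hcd]
      · simp
      · simp
      · exact Set.mem_symmDiff.mpr (Or.inl ⟨by simp, by simp⟩)
      · exact Set.mem_symmDiff.mpr (Or.inl ⟨by simp, by simp⟩)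
      · exact Set.mem_symmDiff.mpr (Or.inr ⟨by simp, by simp⟩)
    by_cases hud : u = d
    · rw [hud, nN, nD]
      apply three_le_ncard_of_mem (Set.toFinite _) (x := some c) (y := some d)
        (z := (none : Option V))
      · simp [hcd]
      · simp
      · simp
      · exact Set.mem_symmDiff.mpr (Or.inl ⟨by simp, by simp⟩)
      · exact Set.mem_symmDiff.mpr (Or.inl ⟨by simp, by simp⟩)
      · exact Set.mem_symmDiff.mpr (Or.inr ⟨by simp, by simp⟩)
    -- u outside {a,b,c,d}
    rw [nN, nO u hua hub huc hud]
    have hpab : ∃ p, (p = a ∨ p = b) ∧ p ∉ G.neighborSet u := by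
      by_cases h : a ∈ G.neighborSet u
      · have h' : G.Adj u a := h
        refine ⟨b, Or.inr rfl, fun hb => ?_⟩
        have hb' : G.Adj u b := hb
        exact htri_ab ⟨u, h'.symm, hb'.symm⟩
      · exact ⟨a, Or.inl rfl, h⟩
    have hqcd : ∃ q, (q = c ∨ q = d) ∧ q ∉ G.neighborSet u := by
      by_cases h : c ∈ G.neighborSet u
      · have h' : G.Adj u c := h
        refine ⟨d, Or.inr rfl, fun hd => ?_⟩
        have hd' : G.Adj u d := hd
        exact htri_cd ⟨u, h'.symm, hd'.symm⟩
      · exact ⟨c, Or.inl rfl, h⟩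
    obtain ⟨p, hpor, hpN⟩ := hpab
    obtain ⟨q, hqor, hqN⟩ := hqcd
    have hw : ∃ w, w ∈ G.neighborSet u ∧ w ≠ a ∧ w ≠ b ∧ w ≠ c ∧ w ≠ d := by
      by_contra hcon
      push_neg at hcon
      have hsub : G.neighborSet u ⊆
          (G.neighborSet u ∩ {a, b}) ∪ (G.neighborSet u ∩ {c, d}) := by
        intro w hwmem
        by_cases h1 : w = a
        · exact Or.inl ⟨hwmem, Or.inl h1⟩
        by_cases h2 : w = b
        · exact Or.inl ⟨hwmem, Or.inr h2⟩
        by_cases h3 : w = c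
        · exact Or.inr ⟨hwmem, Or.inl h3⟩
        exact Or.inr ⟨hwmem, Or.inr (hcon w hwmem h1 h2 h3)⟩
      have c1 : (G.neighborSet u ∩ {a, b}).ncard ≤ 1 := by
        by_cases h : a ∈ G.neighborSet u
        · have h' : G.Adj u a := h
          have hbn : b ∉ G.neighborSet u := fun hb =>
            htri_ab ⟨u, h'.symm, (hb : G.Adj u b).symm⟩
          refine le_trans (Set.ncard_le_ncard ?_ (Set.toFinite _))
            (le_of_eq (Set.ncard_singleton a))
          intro w hwm
          simp only [Set.mem_inter_iff, Set.mem_insert_iff, Set.mem_singleton_iff] at *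
          rcases hwm with ⟨hw1, rfl | rfl⟩
          · rfl
          · exact absurd hw1 hbn
        · refine le_trans (Set.ncard_le_ncard ?_ (Set.toFinite _))
            (le_of_eq (Set.ncard_singleton b))
          intro w hwm
          simp only [Set.mem_inter_iff, Set.mem_insert_iff, Set.mem_singleton_iff] at *
          rcases hwm with ⟨hw1, rfl | rfl⟩
          · exact absurd hw1 h
          · rfl
      have c2 : (G.neighborSet u ∩ {c, d}).ncard ≤ 1 := by
        by_cases h : c ∈ G.neighborSet u
        · have h' : G.Adj u c := h
          have hdn : d ∉ G.neighborSet u := fun hd =>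
            htri_cd ⟨u, h'.symm, (hd : G.Adj u d).symm⟩
          refine le_trans (Set.ncard_le_ncard ?_ (Set.toFinite _))
            (le_of_eq (Set.ncard_singleton c))
          intro w hwm
          simp only [Set.mem_inter_iff, Set.mem_insert_iff, Set.mem_singleton_iff] at *
          rcases hwm with ⟨hw1, rfl | rfl⟩
          · rfl
          · exact absurd hw1 hdn
        · refine le_trans (Set.ncard_le_ncard ?_ (Set.toFinite _))
            (le_of_eq (Set.ncard_singleton d))
          intro w hwm
          simp only [Set.mem_inter_iff, Set.mem_insert_iff, Set.mem_singleton_iff] at *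
          rcases hwm with ⟨hw1, rfl | rfl⟩
          · exact absurd hw1 h
          · rfl
      have hcard := Set.ncard_le_ncard hsub (Set.toFinite _)
      have hun := Set.ncard_union_le (G.neighborSet u ∩ {a, b}) (G.neighborSet u ∩ {c, d})
      rw [hcubic u] at hcard
      omega
    obtain ⟨w, hwN, hwa, hwb, hwc, hwd⟩ := hw
    have hpq : p ≠ q := by
      rcases hpor with rfl | rfl <;> rcases hqor with rfl | rfl <;> assumption
    apply three_le_ncard_of_mem (Set.toFinite _) (x := some p) (y := some q) (z := some w)
    · simpa using hpq
    · rcases hpor with rfl | rfl <;> simp [Ne.symm hwa, Ne.symm hwb]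
    · rcases hqor with rfl | rfl <;> simp [Ne.symm hwc, Ne.symm hwd]
    · exact Set.mem_symmDiff.mpr (Or.inl ⟨by rcases hpor with rfl | rfl <;> simp,
        fun h => hpN (by simpa using h)⟩)
    · exact Set.mem_symmDiff.mpr (Or.inl ⟨by rcases hqor with rfl | rfl <;> simp,
        fun h => hqN (by simpa using h)⟩)
    · exact Set.mem_symmDiff.mpr (Or.inr ⟨Set.mem_image_of_mem _ hwN,
        by simp [hwa, hwb, hwc, hwd]⟩)
  -- some-vs-some
  have hsome : ∀ u v : V, u ≠ v →
      3 ≤ (symmDiff (G'.neighborSet (some u)) (G'.neighborSet (some v))).ncard := by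
    intro u v huv
    by_cases hua : u = a
    · have hva : v ≠ a := fun h => huv (hua.trans h.symm)
      by_cases hvb : v = b
      · rw [hua, hvb, nA, nB]; exact pairQ a b b a eab eab.symm dAB
      by_cases hvc : v = c
      · rw [hua, hvc, nA, nC]; exact pairQ a b c d eab ecd dAC
      by_cases hvd : v = d
      · rw [hua, hvd, nA, nD]; exact pairQ a b d c eab ecd.symm dAD
      · rw [hua, symmDiff_comm, nA, nO v hva hvb hvc hvd]
        exact key2 v a b hva
    by_cases hub : u = b
    · have hvb : v ≠ b := fun h => huv (hub.trans h.symm)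
      by_cases hva : v = a
      · rw [hub, hva, symmDiff_comm, nA, nB]; exact pairQ a b b a eab eab.symm dAB
      by_cases hvc : v = c
      · rw [hub, hvc, nB, nC]; exact pairQ b a c d eab.symm ecd dBC
      by_cases hvd : v = d
      · rw [hub, hvd, nB, nD]; exact pairQ b a d c eab.symm ecd.symm dBD
      · rw [hub, symmDiff_comm, nB, nO v hva hvb hvc hvd]
        exact key2 v b a hvb
    by_cases huc : u = c
    · have hvc : v ≠ c := fun h => huv (huc.trans h.symm)
      by_cases hva : v = a
      · rw [huc, hva, symmDiff_comm, nA, nC]; exact pairQ a b c d eab ecd dAC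
      by_cases hvb : v = b
      · rw [huc, hvb, symmDiff_comm, nB, nC]; exact pairQ b a c d eab.symm ecd dBC
      by_cases hvd : v = d
      · rw [huc, hvd, nC, nD]; exact pairQ c d d c ecd ecd.symm dCD
      · rw [huc, symmDiff_comm, nC, nO v hva hvb hvc hvd]
        exact key2 v c d hvc
    by_cases hud : u = d
    · have hvd : v ≠ d := fun h => huv (hud.trans h.symm)
      by_cases hva : v = a
      · rw [hud, hva, symmDiff_comm, nA, nD]; exact pairQ a b d c eab ecd.symm dAD
      by_cases hvb : v = b
      · rw [hud, hvb, symmDiff_comm, nB, nD]; exact pairQ b a d c eab.symm ecd.symm dBD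
      by_cases hvc : v = c
      · rw [hud, hvc, symmDiff_comm, nC, nD]; exact pairQ c d d c ecd ecd.symm dCD
      · rw [hud, symmDiff_comm, nD, nO v hva hvb hvc hvd]
        exact key2 v d c hvd
    by_cases hva : v = a
    · rw [hva, nO u hua hub huc hud, nA]; exact key2 u a b hua
    by_cases hvb : v = b
    · rw [hvb, nO u hua hub huc hud, nB]; exact key2 u b a hub
    by_cases hvc : v = c
    · rw [hvc, nO u hua hub huc hud, nC]; exact key2 u c d huc
    by_cases hvd : v = d
    · rw [hvd, nO u hua hub huc hud, nD]; exact key2 u d c hud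
    · rw [nO u hua hub huc hud, nO v hva hvb hvc hvd, symmDiff_image_some,
        Set.ncard_image_of_injective _ (Option.some_injective V)]
      exact hdist u v huv
  -- assemble
  refine ⟨Set.univ, ?_, ?_⟩
  · intro z
    rw [Set.inter_univ]
    cases z with
    | none =>
      rw [nN]
      apply three_le_ncard_of_mem (Set.toFinite _) (x := some a) (y := some b) (z := some c)
      · simp [hab]
      · simp [hac]
      · simp [hbc]
      · simp
      · simp
      · simp
    | some u =>
      by_cases hua : u = a
      · rw [hua, nA, Set.ncard_insert_of_notMem (by simp),
          Set.ncard_image_of_injective _ (Option.some_injective V),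
          Set.ncard_diff_singleton_of_mem ((G.mem_neighborSet a b).mpr eab), hcubic a]
      by_cases hub : u = b
      · rw [hub, nB, Set.ncard_insert_of_notMem (by simp),
          Set.ncard_image_of_injective _ (Option.some_injective V),
          Set.ncard_diff_singleton_of_mem ((G.mem_neighborSet b a).mpr eab.symm), hcubic b]
      by_cases huc : u = c
      · rw [huc, nC, Set.ncard_insert_of_notMem (by simp),
          Set.ncard_image_of_injective _ (Option.some_injective V),
          Set.ncard_diff_singleton_of_mem ((G.mem_neighborSet c d).mpr ecd), hcubic c]
      by_cases hud : u = d
      · rw [hud, nD, Set.ncard_insert_of_notMem (by simp),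
          Set.ncard_image_of_injective _ (Option.some_injective V),
          Set.ncard_diff_singleton_of_mem ((G.mem_neighborSet d c).mpr ecd.symm), hcubic d]
      · rw [nO u hua hub huc hud,
          Set.ncard_image_of_injective _ (Option.some_injective V), hcubic u]
  · intro z w hzw
    simp only [Set.inter_univ]
    cases z with
    | none =>
      cases w with
      | none => exact absurd rfl hzw
      | some v => exact hnone v
    | some u =>
      cases w with
      | none => rw [symmDiff_comm]; exact hnone u
      | some v => exact hsome u v (fun h => hzw (congrArg some h))
end

section
/- Let G be a finite simple graph that is cubic (every vertex has degree 3) or quasi-cubic (exactly one vertex has degree 4 and every other vertex has degree 3). If S is an ERR:OLD set for G, then S = V(G); in particular, the minimum size of an ERR:OLD set of such a graph, when one exists, equals the number of vertices of G. -/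
/-- If `G` is cubic or quasi-cubic and `S` is an ERR:OLD set for `G`, then `S` is the
full vertex set. -/
theorem errOld_eq_univ_of_cubic_or_quasiCubic {V : Type*} [Fintype V] (G : SimpleGraph V)
    (hdeg : (∀ v : V, (G.neighborSet v).ncard = 3) ∨
      (∃ w : V, (G.neighborSet w).ncard = 4 ∧
        ∀ v : V, v ≠ w → (G.neighborSet v).ncard = 3))
    (S : Set V) (hS : IsErrOld G S) :
    S = (Set.univ : Set V) := by
  obtain ⟨hdom, _⟩ := hS
  by_contra hne
  have hex : ∃ v, v ∉ S := by
    by_contra h; push_neg at h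
    exact hne (Set.eq_univ_of_forall h)
  obtain ⟨v, hv⟩ := hex
  -- Any degree-3 neighbor of v yields a contradiction.
  have key : ∀ x : V, (G.neighborSet x).ncard = 3 → v ∈ G.neighborSet x → False := by
    intro x hx hvx
    have h1 : (G.neighborSet x ∩ S) ⊆ G.neighborSet x \ {v} := by
      rintro y ⟨hy1, hy2⟩
      exact ⟨hy1, fun h => hv (by simpa [Set.mem_singleton_iff.mp h] using hy2)⟩
    have h2 : (G.neighborSet x \ {v}).ncard = 2 := by
      rw [Set.ncard_diff_singleton_of_mem hvx, hx]
    have h3 : (G.neighborSet x ∩ S).ncard ≤ 2 :=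
      h2 ▸ Set.ncard_le_ncard h1 (Set.toFinite _)
    have := hdom x
    omega
  -- v has a neighbor x of degree 3.
  have hvcard : 3 ≤ (G.neighborSet v).ncard := by
    rcases hdeg with hcub | ⟨w, hw4, hw3⟩
    · simp [hcub v]
    · by_cases hvw : v = w
      · rw [hvw, hw4]; omega
      · simp [hw3 v hvw]
  rcases hdeg with hcub | ⟨w, hw4, hw3⟩
  · have hne' : (G.neighborSet v).Nonempty := by
      rw [← Set.ncard_pos]; omega
    obtain ⟨x, hx⟩ := hne'
    exact key x (hcub x) ((G.mem_neighborSet _ _).mpr ((G.mem_neighborSet _ _).mp hx).symm)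
  · have hex2 : ∃ x ∈ G.neighborSet v, x ≠ w := by
      by_contra h; push_neg at h
      have hsub : G.neighborSet v ⊆ {w} := fun y hy => h y hy
      have := Set.ncard_le_ncard hsub (Set.toFinite _)
      rw [Set.ncard_singleton] at this
      omega
    obtain ⟨x, hx, hxw⟩ := hex2
    exact key x (hw3 x hxw) ((G.mem_neighborSet _ _).mpr ((G.mem_neighborSet _ _).mp hx).symm)
end
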